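/- Let (R, m, k) be a one-dimensional Cohen–Macaulay local ring with infinite residue field admitting a canonical module ω_R with R ⊆ ω_R ⊆ R̄. If R is not a DVR, then (R:ω_R):m = m:m if and only if R is almost Gorenstein. Consequently, every almost Gorenstein one-dimensional Cohen–Macaulay local ring is gAGL. -/

import Mathlib

/- Common definitions: fractional ideals in the total ring of fractions, canonical
ideals (via the Herzog–Kunz criterion), reductions, (almost) canonical ideals and
(almost) Gorenstein rings, for one-dimensional Cohen–Macaulay rings.
Throughout, the total ring of fractions `Q(R)` is `FractionRing R` and fractional
ideals are submodules of it. -/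

set_option maxHeartbeats 1600000
set_option synthInstance.maxHeartbeats 800000

noncomputable section

open IsLocalRing Submodule

variable (T A : Type*) [CommRing T] [CommRing A] [Algebra T A]

/-- The `Localization S`-algebra structure on `LocalizedModule S A` (a global instance in the
older Mathlib, `LocalizedModule.algebra`), built on the standard module structure. -/
instance localizedModuleAlgebraOld {R : Type*} [CommRing R] {S : Submonoid R} {B : Type*}
    [CommRing B] [Algebra R B] : Algebra (Localization S) (LocalizedModule S B) :=
  Algebra.ofModule
    (fun x p q => by
      refine Localization.induction_on x ?_
      rintro ⟨r, s⟩
      refine LocalizedModule.induction_on (fun a t => ?_) p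
      refine LocalizedModule.induction_on (fun b u => ?_) q
      simp only [LocalizedModule.mk_smul_mk, LocalizedModule.mk_mul_mk, smul_mul_assoc, mul_assoc])
    (fun x p q => by
      refine Localization.induction_on x ?_
      rintro ⟨r, s⟩
      refine LocalizedModule.induction_on (fun a t => ?_) p
      refine LocalizedModule.induction_on (fun b u => ?_) q
      simp only [LocalizedModule.mk_smul_mk, LocalizedModule.mk_mul_mk, mul_smul_comm]
      rw [mul_left_comm])

/-- The submodule of the `T`-algebra `A` generated by the image of an ideal of `T`. -/
def idealSub (I : Ideal T) : Submodule T A := Submodule.map (Algebra.linearMap T A) I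

/-- The maximal ideal of the local ring `T`, viewed inside `A`. -/
def maxSub [IsLocalRing T] : Submodule T A := idealSub T A (maximalIdeal T)

/-- The Jacobson radical of `T`, viewed inside `A`. -/
def jacSub : Submodule T A := Submodule.map (Algebra.linearMap T A) ((⊥ : Ideal T).jacobson)

/-- The integral closure of `T` in `A`, as a submodule of `A`. -/
def intCl : Submodule T A := Subalgebra.toSubmodule (integralClosure T A)

/-- `I` is a fractional ideal of `T` inside `A` (`A` playing the role of the total ring
of fractions of `T`): `I` contains an invertible element and has bounded denominators. -/
def IsFracIdeal (I : Submodule T A) : Prop :=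
  (∃ u : Aˣ, (u : A) ∈ I) ∧ ∃ r ∈ nonZeroDivisors T, ∀ x ∈ I, r • x ∈ (1 : Submodule T A)

/-- The length `ℓ_T(N/I)` of the subquotient `N/(I ∩ N)`, defined as the Krull dimension
of its lattice of submodules. -/
def relLength (I N : Submodule T A) : WithBot ℕ∞ :=
  Order.krullDim (Submodule T (↥N ⧸ (I.comap N.subtype)))

/-- Herzog–Kunz criterion: a fractional ideal `ω` of `T` is a canonical module of `T` iff
`ℓ_T((ω : n)/ω) = 1` for every maximal ideal `n` of `T`. -/
def IsCanonicalIdeal (ω : Submodule T A) : Prop :=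
  IsFracIdeal T A ω ∧ ∀ n : Ideal T, n.IsMaximal → relLength T A ω (ω / idealSub T A n) = 1

/-- `z ∈ J` is a reduction of the fractional ideal `J`: `z J^n = J^{n+1}` for some `n`. -/
def IsReductionOf (z : A) (J : Submodule T A) : Prop :=
  z ∈ J ∧ ∃ n : ℕ, J ^ (n + 1) = span T {z} * J ^ n

/-- Almost canonical ideal over a local ring `T` (with respect to a canonical module `ω`,
`T ⊆ ω ⊆ T̄`): for a (regular) reduction `z` of `ω : I` one has `ω : (m:m) ⊆ zI`. -/
def IsAlmostCanonicalLoc [IsLocalRing T] (ω I : Submodule T A) : Prop :=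
  ∃ z : A, IsUnit z ∧ IsReductionOf T A z (ω / I) ∧
    ω / (maxSub T A / maxSub T A) ≤ span T {z} * I

/-- Almost canonical ideal over a (not necessarily local) ring: the localization at every
maximal ideal is an almost canonical ideal of the localized ring. -/
def IsAlmostCanonical (ω I : Submodule T A) : Prop :=
  ∀ (p : Ideal T) (hp : p.IsMaximal),
    letI := hp.isPrime
    IsAlmostCanonicalLoc (Localization.AtPrime p) (LocalizedModule p.primeCompl A)
      (ω.localized p.primeCompl) (I.localized p.primeCompl)

/-- `S` is a discrete valuation ring. -/
def IsDVR (S : Type*) [CommRing S] : Prop :=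
  ∃ h : IsDomain S, @IsDiscreteValuationRing S _ h

/-- A one-dimensional Cohen–Macaulay local ring `S` is almost Gorenstein if `m ω ⊆ m`
for a canonical module `S ⊆ ω ⊆ S̄` of `S`. -/
def IsAlmostGorensteinLoc (S : Type*) [CommRing S] [IsLocalRing S] : Prop :=
  ∃ ω : Submodule S (FractionRing S),
    IsCanonicalIdeal S (FractionRing S) ω ∧ 1 ≤ ω ∧
      ω ≤ intCl S (FractionRing S) ∧
      maxSub S (FractionRing S) * ω ≤ maxSub S (FractionRing S)

/-- A ring is almost Gorenstein if its localization at every maximal ideal is. -/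
def IsAlmostGorenstein (S : Type*) [CommRing S] : Prop :=
  ∀ (p : Ideal S) (hp : p.IsMaximal),
    letI := hp.isPrime
    IsAlmostGorensteinLoc (Localization.AtPrime p)

/-- A minimal system of generators of the maximal ideal of a local ring. -/
def IsMinGenSys (S : Type*) [CommRing S] [IsLocalRing S] {n : ℕ} (g : Fin n → S) : Prop :=
  Ideal.span (Set.range g) = maximalIdeal S ∧
    ∀ i : Fin n, Ideal.span (g '' {j | j ≠ i}) ≠ maximalIdeal S

/-- `R` is a generalized almost Gorenstein local (gAGL) ring, with respect to the
canonical module `ω` and the ring `B = m:m`: `m ω J(B) ⊆ R`. -/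
def IsGAGL (R : Type*) [CommRing R] [IsLocalRing R] (ω : Submodule R (FractionRing R))
    (B : Subalgebra R (FractionRing R)) : Prop :=
  maxSub R (FractionRing R) * ω *
      ((jacSub ↥B (FractionRing R)).restrictScalars R) ≤ 1

/-- `1` is a reduction of the localization `J_p` of the fractional ideal `J` at the
submonoid `p` (for `p` the complement of a maximal ideal, this is the localization of
`J` at that maximal ideal): `1 ∈ J_p` and `(J_p)^{n+1} = (J_p)^n` for some `n`. -/
def IsOneReductionOfLocalization (p : Submonoid T) (J : Submodule T A) : Prop :=
  (1 : LocalizedModule p A) ∈ J.localized p ∧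
    ∃ n : ℕ, (J.localized p) ^ (n + 1) = (J.localized p) ^ n


/-!
Everything rests on `R : m = m : m` when `R` is not a DVR. If `x ∈ R : m` but `x m ⊄ m`,
then `x t` is a unit for some `t ∈ m`, so `t` is invertible in `Q(R)` with inverse in `R : m`;
this forces `m = tR` with `t` a nonzerodivisor, and Krull's intersection theorem then makes
`R` a DVR. Granting it, `(R : ω) : m = m : m` unwinds to `ω ⊆ R : m = m : m`, that is
`m ω ⊆ m`; and since `J(B) ⊆ B = m : m`, almost Gorensteinness gives
`m ω J(B) ⊆ m (m : m) ⊆ m ⊆ R`.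
-/

namespace IsLocalRing

variable {R : Type*} [CommRing R] [IsLocalRing R] [IsNoetherianRing R]

theorem exists_isUnit_mul_pow_of_maximalIdeal_eq_span {t : R}
    (ht : maximalIdeal R = Ideal.span {t}) {x : R} (hx : x ≠ 0) :
    ∃ (n : ℕ) (a : R), IsUnit a ∧ x = a * t ^ n := by
  have hpow (n : ℕ) : maximalIdeal R ^ n = Ideal.span {t ^ n} := by
    rw [ht, Ideal.span_singleton_pow]
  have hnot : ∃ n, x ∉ maximalIdeal R ^ n := by
    by_contra! h
    have hx0 : x ∈ ⨅ n : ℕ, maximalIdeal R ^ n := Ideal.mem_iInf.mpr h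
    rw [Ideal.iInf_pow_eq_bot_of_isLocalRing _ (maximalIdeal.isMaximal R).ne_top] at hx0
    exact hx hx0
  obtain ⟨n, hxn, hxn1⟩ := Nat.exists_not_and_succ_of_not_zero_of_exists
    (by simp [pow_zero, Ideal.one_eq_top]) hnot
  rw [not_not, hpow, Ideal.mem_span_singleton'] at hxn
  obtain ⟨a, rfl⟩ := hxn
  refine ⟨n, a, ?_, rfl⟩
  by_contra ha
  obtain ⟨b, rfl⟩ := Ideal.mem_span_singleton'.mp (ht ▸ (mem_maximalIdeal a).mpr ha)
  exact hxn1 (by rw [hpow, Ideal.mem_span_singleton']; exact ⟨b, by ring⟩)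

theorem isDomain_of_maximalIdeal_eq_span {t : R} (ht : maximalIdeal R = Ideal.span {t})
    (htR : t ∈ nonZeroDivisors R) : IsDomain R := by
  have : NoZeroDivisors R := by
    refine ⟨fun {x y} hxy => or_iff_not_and_not.mpr fun ⟨hx, hy⟩ => ?_⟩
    obtain ⟨n, a, ha, rfl⟩ := exists_isUnit_mul_pow_of_maximalIdeal_eq_span ht hx
    obtain ⟨k, b, hb, rfl⟩ := exists_isUnit_mul_pow_of_maximalIdeal_eq_span ht hy
    have hab : a * b * t ^ (n + k) = 0 := by rw [← hxy]; ring
    exact (ha.mul hb).ne_zero (mem_nonZeroDivisors_iff_right.mp (pow_mem htR _) _ hab)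
  exact NoZeroDivisors.to_isDomain R

theorem isDVR_of_maximalIdeal_eq_span {t : R} (ht : maximalIdeal R = Ideal.span {t})
    (htR : t ∈ nonZeroDivisors R) : IsDVR R := by
  have hdom := isDomain_of_maximalIdeal_eq_span ht htR
  have hR : ¬IsField R := by
    rw [isField_iff_maximalIdeal_eq, ht, Ideal.span_singleton_eq_bot]
    exact nonZeroDivisors.ne_zero htR
  have hprin : (maximalIdeal R).IsPrincipal := ⟨⟨t, ht⟩⟩
  exact ⟨hdom, ((IsDiscreteValuationRing.TFAE R hR).out 4 0).mp hprin⟩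

end IsLocalRing

section FractionalIdeals

variable {R Q : Type*} [CommRing R] [CommRing Q] [Algebra R Q]

theorem Submodule.div_mul_le (J K : Submodule R Q) : J / K * K ≤ J :=
  Submodule.le_div_iff_mul_le.mp le_rfl

theorem one_div_div_eq_div_self_iff {I ω : Submodule R Q} (hI : 1 / I = I / I)
    (hω : 1 ≤ ω) : 1 / ω / I = I / I ↔ I * ω ≤ I := by
  have hI1 : I ≤ 1 := by
    rw [← one_mem_div, hI, one_mem_div]
  constructor
  · intro h
    have hIω : I ≤ 1 / ω := by
      have h1 : (1 : Submodule R Q) ≤ 1 / ω / I := h ▸ one_le.mpr (one_mem_div.mpr le_rfl)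
      rwa [Submodule.le_div_iff_mul_le, one_mul] at h1
    have hωI : ω ≤ I / I := by
      rwa [← hI, Submodule.le_div_iff_mul_le, mul_comm, ← Submodule.le_div_iff_mul_le]
    simpa [mul_comm] using Submodule.le_div_iff_mul_le.mp hωI
  · intro h
    refine le_antisymm ?_ ?_
    · have hω1 : 1 / ω ≤ 1 := fun x hx => by simpa using hx 1 (hω (one_le.mp le_rfl))
      rw [← hI]
      exact Submodule.le_div_iff_mul_le.mpr ((Submodule.div_mul_le _ _).trans hω1)
    · rw [Submodule.le_div_iff_mul_le, Submodule.le_div_iff_mul_le, mul_assoc]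
      exact (mul_le_mul' le_rfl h).trans ((Submodule.div_mul_le _ _).trans hI1)

theorem mul_mul_le_one_of_mul_le {I ω J : Submodule R Q} (hI : I ≤ 1) (h : I * ω ≤ I)
    (hJ : J ≤ I / I) : I * ω * J ≤ 1 :=
  calc I * ω * J ≤ I / I * I := by rw [mul_comm (I / I)]; exact mul_le_mul' h hJ
    _ ≤ 1 := (Submodule.div_mul_le I I).trans hI

theorem jacSub_restrictScalars_le (B : Subalgebra R Q) :
    (jacSub B Q).restrictScalars R ≤ Subalgebra.toSubmodule B := by
  rintro _ ⟨b, -, rfl⟩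
  exact b.2

variable [IsLocalRing R]

theorem mem_maxSub_iff {x : Q} :
    x ∈ maxSub R Q ↔ ∃ s ∈ maximalIdeal R, algebraMap R Q s = x :=
  Iff.rfl

theorem maxSub_le_one : maxSub R Q ≤ 1 := by
  rintro _ ⟨s, -, rfl⟩
  exact mem_one.mpr ⟨s, rfl⟩

variable [IsNoetherianRing R] [FaithfulSMul R Q]

theorem isDVR_of_mul_eq_one_of_mem_one_div_maxSub {t : R} (ht : t ∈ maximalIdeal R) {z : Q}
    (htz : algebraMap R Q t * z = 1) (hz : z ∈ 1 / maxSub R Q) : IsDVR R := by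
  have hinj := FaithfulSMul.algebraMap_injective R Q
  refine IsLocalRing.isDVR_of_maximalIdeal_eq_span (t := t)
    (le_antisymm (fun s hs => ?_) ((Ideal.span_singleton_le_iff_mem _).mpr ht)) ?_
  · obtain ⟨v, hv⟩ := mem_one.mp (hz _ (mem_maxSub_iff.mpr ⟨s, hs, rfl⟩))
    refine Ideal.mem_span_singleton'.mpr ⟨v, hinj ?_⟩
    rw [map_mul, hv]
    linear_combination algebraMap R Q s * htz
  · refine mem_nonZeroDivisors_iff_right.mpr fun a hat => hinj ?_
    have hat' := congrArg (algebraMap R Q) hat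
    rw [map_mul, map_zero] at hat'
    rw [map_zero]
    linear_combination z * hat' - algebraMap R Q a * htz

theorem one_div_maxSub_eq_maxSub_div_maxSub (hR : ¬IsDVR R) :
    1 / maxSub R Q = maxSub R Q / maxSub R Q := by
  refine le_antisymm (fun x hx => ?_) ?_
  · by_contra hxm
    obtain ⟨w, hw, hxw⟩ : ∃ w ∈ maxSub R Q, x * w ∉ maxSub R Q := by
      simpa [mem_div_iff_forall_mul_mem] using hxm
    obtain ⟨t, ht, rfl⟩ := mem_maxSub_iff.mp hw
    obtain ⟨u, hu⟩ := mem_one.mp (hx _ hw)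
    have hu_unit : IsUnit u := by
      by_contra hu_unit
      exact hxw (mem_maxSub_iff.mpr ⟨u, (mem_maximalIdeal u).mpr hu_unit, hu⟩)
    refine hR (isDVR_of_mul_eq_one_of_mem_one_div_maxSub ht
      (z := x * algebraMap R Q ↑hu_unit.unit⁻¹) ?_ ?_)
    · rw [← mul_assoc, mul_comm _ x, ← hu, ← map_mul, hu_unit.mul_val_inv, map_one]
    · rw [mul_comm, ← Algebra.smul_def]
      exact smul_mem _ _ hx
  · rw [Submodule.le_div_iff_mul_le]
    exact (Submodule.div_mul_le _ _).trans maxSub_le_one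

end FractionalIdeals

theorem stmt7_general (R : Type*) [CommRing R] [IsLocalRing R] [IsNoetherianRing R]
    (ω : Submodule R (FractionRing R))
    (hω1 : 1 ≤ ω)
    (B : Subalgebra R (FractionRing R))
    (hB : Subalgebra.toSubmodule B = maxSub R (FractionRing R) / maxSub R (FractionRing R)) :
    (¬ IsDVR R →
      (((1 : Submodule R (FractionRing R)) / ω) / maxSub R (FractionRing R) =
          maxSub R (FractionRing R) / maxSub R (FractionRing R) ↔
        maxSub R (FractionRing R) * ω ≤ maxSub R (FractionRing R))) ∧
    (maxSub R (FractionRing R) * ω ≤ maxSub R (FractionRing R) → IsGAGL R ω B) :=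
  ⟨fun hR => one_div_div_eq_div_self_iff (one_div_maxSub_eq_maxSub_div_maxSub hR) hω1,
    fun h => mul_mul_le_one_of_mul_le maxSub_le_one h (hB ▸ jacSub_restrictScalars_le B)⟩

/-- Remark `Almost Gorenstein are gAGL`: if `R` is not a DVR then
`(R:ω):m = m:m` iff `R` is almost Gorenstein; consequently every almost Gorenstein
one-dimensional Cohen–Macaulay local ring is gAGL. -/
theorem stmt7 (R : Type*) [CommRing R] [IsLocalRing R] [IsNoetherianRing R]
    (hdim : ringKrullDim R = 1)
    (hCM : ∃ x ∈ maximalIdeal R, x ∈ nonZeroDivisors R)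
    (hres : Infinite (ResidueField R))
    (ω : Submodule R (FractionRing R))
    (hω : IsCanonicalIdeal R (FractionRing R) ω) (hω1 : 1 ≤ ω)
    (hω2 : ω ≤ intCl R (FractionRing R))
    (B : Subalgebra R (FractionRing R))
    (hB : Subalgebra.toSubmodule B = maxSub R (FractionRing R) / maxSub R (FractionRing R)) :
    (¬ IsDVR R →
      (((1 : Submodule R (FractionRing R)) / ω) / maxSub R (FractionRing R) =
          maxSub R (FractionRing R) / maxSub R (FractionRing R) ↔
        maxSub R (FractionRing R) * ω ≤ maxSub R (FractionRing R))) ∧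
    (maxSub R (FractionRing R) * ω ≤ maxSub R (FractionRing R) → IsGAGL R ω B) :=
  stmt7_general R ω hω1 B hB
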